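/- arXiv:1908.09078 — 5 statements merged into one kernel-verified Lean document; each statement's English description precedes it below -/
import Mathlib

section
/- Let A : ℝ^{m×n} → ℝ^p be a linear map and let k ≥ 1 be an integer. Let α = λ_{k,min}(A*A) and β = λ_{k,max}(A*A) be the k-restricted smallest and largest eigenvalues of A*A, and suppose α > 0. Then for all X, Y ∈ ℝ^{m×n} such that the m×2n concatenated matrix [X Y] has rank at most k, one has |(2/(α+β))⟨A(X), A(Y)⟩ − ⟨X, Y⟩| ≤ ((β−α)/(β+α))·‖X‖_F·‖Y‖_F, where ⟨·,·⟩ denotes the trace inner product on ℝ^{m×n} and the standard inner product on ℝ^p. -/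
open scoped BigOperators

noncomputable section

namespace Paper

open Matrix

/-- Euclidean dot product on `ℝ^p`. -/
def vdot {p : ℕ} (y z : Fin p → ℝ) : ℝ := ∑ i, y i * z i

/-- Euclidean norm on `ℝ^p`. -/
def vnorm {p : ℕ} (y : Fin p → ℝ) : ℝ := Real.sqrt (∑ i, (y i) ^ 2)

/-- Trace (Frobenius) inner product of matrices. -/
def finner {m n : ℕ} (X Y : Matrix (Fin m) (Fin n) ℝ) : ℝ := ∑ i, ∑ j, X i j * Y i j

/-- Frobenius norm of a matrix. -/
def fnorm {m n : ℕ} (X : Matrix (Fin m) (Fin n) ℝ) : ℝ := Real.sqrt (∑ i, ∑ j, (X i j) ^ 2)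

/-- Euclidean norm of the `j`-th column of a matrix. -/
def colNorm {m k : ℕ} (U : Matrix (Fin m) (Fin k) ℝ) (j : Fin k) : ℝ :=
  Real.sqrt (∑ i, (U i j) ^ 2)

/-- The `ℓ_{2,0}` norm of a matrix: the number of nonzero columns. -/
def l20 {m k : ℕ} (U : Matrix (Fin m) (Fin k) ℝ) : ℕ :=
  Set.ncard {j : Fin k | (fun i => U i j) ≠ 0}

/-- Number of nonzero entries of a vector. -/
def zeroNorm {k : ℕ} (z : Fin k → ℝ) : ℕ := Set.ncard {i : Fin k | z i ≠ 0}

/-- `k`-restricted smallest eigenvalue of `A*A`. -/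
def lamMin {m n p : ℕ} (A : Matrix (Fin m) (Fin n) ℝ →ₗ[ℝ] (Fin p → ℝ)) (k : ℕ) : ℝ :=
  sInf {t : ℝ | ∃ X : Matrix (Fin m) (Fin n) ℝ, X.rank ≤ k ∧ fnorm X = 1 ∧ t = (vnorm (A X)) ^ 2}

/-- `k`-restricted largest eigenvalue of `A*A`. -/
def lamMax {m n p : ℕ} (A : Matrix (Fin m) (Fin n) ℝ →ₗ[ℝ] (Fin p → ℝ)) (k : ℕ) : ℝ :=
  sSup {t : ℝ | ∃ X : Matrix (Fin m) (Fin n) ℝ, X.rank ≤ k ∧ fnorm X = 1 ∧ t = (vnorm (A X)) ^ 2}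

/-- Operator (spectral) norm of the sampling operator. -/
def opNorm {m n p : ℕ} (A : Matrix (Fin m) (Fin n) ℝ →ₗ[ℝ] (Fin p → ℝ)) : ℝ :=
  sSup {t : ℝ | ∃ X : Matrix (Fin m) (Fin n) ℝ, fnorm X = 1 ∧ t = vnorm (A X)}

/-- Spectral norm of a matrix. -/
def specNorm {a b : ℕ} (U : Matrix (Fin a) (Fin b) ℝ) : ℝ :=
  sSup {t : ℝ | ∃ x : Fin b → ℝ, vnorm x = 1 ∧ t = vnorm (U.mulVec x)}

/-- Adjoint of `A` w.r.t. the trace inner product, applied to `y`. -/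
def adjApply {m n p : ℕ} (A : Matrix (Fin m) (Fin n) ℝ →ₗ[ℝ] (Fin p → ℝ))
    (y : Fin p → ℝ) : Matrix (Fin m) (Fin n) ℝ :=
  fun i j => vdot (A (Matrix.single i j 1)) y

/-- `A*A` applied to a matrix. -/
def AstarA {m n p : ℕ} (A : Matrix (Fin m) (Fin n) ℝ →ₗ[ℝ] (Fin p → ℝ))
    (X : Matrix (Fin m) (Fin n) ℝ) : Matrix (Fin m) (Fin n) ℝ :=
  adjApply A (A X)

/-- Singular values of `X` arranged nonincreasingly, `sigmaFin X 0` the largest. -/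
def sigmaFin {m n : ℕ} (X : Matrix (Fin m) (Fin n) ℝ) : Fin m → ℝ := fun j =>
  Real.sqrt ((Matrix.isHermitian_mul_conjTranspose_self X).eigenvalues
    ((Tuple.sort (Matrix.isHermitian_mul_conjTranspose_self X).eigenvalues) j.rev))

/-- The `i`-th largest singular value (1-indexed); `0` for out-of-range indices. -/
def singularValue {m n : ℕ} (i : ℕ) (X : Matrix (Fin m) (Fin n) ℝ) : ℝ :=
  if h : 1 ≤ i ∧ i ≤ m then sigmaFin X ⟨i - 1, by omega⟩ else 0

/-- The family `𝓛` of proper lsc convex functions `φ : ℝ → (−∞,∞]` with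
`[0,1] ⊆ int(dom φ)`, `φ(1) = 1` and `min_{t ∈ [0,1]} φ(t) = 0` attained at `t*`. -/
structure LFamily where
  phi : ℝ → EReal
  lsc : LowerSemicontinuous phi
  convex : ∀ x y a b : ℝ, 0 ≤ a → 0 ≤ b → a + b = 1 →
    phi (a * x + b * y) ≤ (a : EReal) * phi x + (b : EReal) * phi y
  ne_bot : ∀ x, phi x ≠ ⊥
  icc_subset_interior_dom : Set.Icc (0 : ℝ) 1 ⊆ interior {t : ℝ | phi t ≠ ⊤}
  phi_one : phi 1 = 1
  tstar : ℝ
  tstar_mem : tstar ∈ Set.Icc (0 : ℝ) 1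
  phi_tstar : phi tstar = 0
  phi_nonneg : ∀ t ∈ Set.Icc (0 : ℝ) 1, 0 ≤ phi t

/-- Left derivative of `φ` at `1`, as the supremum of difference quotients. -/
def leftDerivOne (L : LFamily) : ℝ :=
  sSup {q : ℝ | ∃ t : ℝ, 0 ≤ t ∧ t < 1 ∧ q = (1 - (L.phi t).toReal) / (1 - t)}

/-- The function `ψ`: equal to `φ` on `[0,1]` and `+∞` elsewhere. -/
def psi (L : LFamily) (t : ℝ) : EReal := if t ∈ Set.Icc (0 : ℝ) 1 then L.phi t else ⊤

/-- The conjugate `ψ*` of `ψ`. -/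
def psiStar (L : LFamily) (s : ℝ) : EReal := ⨆ t : ℝ, ((s * t : ℝ) : EReal) - psi L t

/-! Flattening matrices into Euclidean vectors turns `finner`/`fnorm` and `vdot`/`vnorm` into
inner products and norms. If `rank [X Y] ≤ k` then every `c • X + d • Y` has rank at most `k`,
so `α ‖Z‖² ≤ ‖A Z‖² ≤ β ‖Z‖²` on the span of `X` and `Y`. Comparing these bounds for
`Z = ‖Y‖ X ± ‖X‖ Y` and subtracting gives `|2 ⟪AX, AY⟫ - (α + β) ⟪X, Y⟫| ≤ (β - α) ‖X‖ ‖Y‖`. -/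

open scoped InnerProductSpace

section Polarization

variable {E F : Type*} [NormedAddCommGroup E] [InnerProductSpace ℝ E]
  [NormedAddCommGroup F] [InnerProductSpace ℝ F]

lemma norm_smul_add_smul_sq (c d : ℝ) (x y : E) :
    ‖c • x + d • y‖ ^ 2 = c ^ 2 * ‖x‖ ^ 2 + 2 * (c * d) * ⟪x, y⟫_ℝ + d ^ 2 * ‖y‖ ^ 2 := by
  rw [norm_add_sq_real, norm_smul, norm_smul, real_inner_smul_left, real_inner_smul_right,
    Real.norm_eq_abs, Real.norm_eq_abs, mul_pow, mul_pow, sq_abs, sq_abs]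
  ring

lemma abs_two_mul_inner_sub_le_of_norm_sq_between {α β : ℝ} {x y : E} {x' y' : F}
    (h : ∀ c d : ℝ, α * ‖c • x + d • y‖ ^ 2 ≤ ‖c • x' + d • y'‖ ^ 2 ∧
      ‖c • x' + d • y'‖ ^ 2 ≤ β * ‖c • x + d • y‖ ^ 2) :
    |2 * ⟪x', y'⟫_ℝ - (α + β) * ⟪x, y⟫_ℝ| ≤ (β - α) * (‖x‖ * ‖y‖) := by
  rcases eq_or_ne x 0 with rfl | hx
  · obtain rfl : x' = 0 := by simpa using (h 1 0).2
    simp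
  rcases eq_or_ne y 0 with rfl | hy
  · obtain rfl : y' = 0 := by simpa using (h 0 1).2
    simp
  have hxy : 0 < ‖x‖ * ‖y‖ := mul_pos (norm_pos_iff.2 hx) (norm_pos_iff.2 hy)
  obtain ⟨hp_lo, hp_hi⟩ := h ‖y‖ ‖x‖
  obtain ⟨hm_lo, hm_hi⟩ := h ‖y‖ (-‖x‖)
  simp only [norm_smul_add_smul_sq] at hp_lo hp_hi hm_lo hm_hi
  rw [abs_le]
  constructor <;> nlinarith

lemma abs_two_div_mul_inner_sub_inner_le {α β : ℝ} (hαβ : 0 < α + β) {x y : E} {x' y' : F}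
    (h : ∀ c d : ℝ, α * ‖c • x + d • y‖ ^ 2 ≤ ‖c • x' + d • y'‖ ^ 2 ∧
      ‖c • x' + d • y'‖ ^ 2 ≤ β * ‖c • x + d • y‖ ^ 2) :
    |2 / (α + β) * ⟪x', y'⟫_ℝ - ⟪x, y⟫_ℝ| ≤ (β - α) / (β + α) * (‖x‖ * ‖y‖) := by
  calc |2 / (α + β) * ⟪x', y'⟫_ℝ - ⟪x, y⟫_ℝ|
      = |(2 * ⟪x', y'⟫_ℝ - (α + β) * ⟪x, y⟫_ℝ) / (α + β)| := by congr 1; field_simp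
    _ = |2 * ⟪x', y'⟫_ℝ - (α + β) * ⟪x, y⟫_ℝ| / (α + β) := by rw [abs_div, abs_of_pos hαβ]
    _ ≤ (β - α) * (‖x‖ * ‖y‖) / (α + β) :=
        div_le_div_of_nonneg_right (abs_two_mul_inner_sub_le_of_norm_sq_between h) hαβ.le
    _ = (β - α) / (β + α) * (‖x‖ * ‖y‖) := by rw [add_comm α β]; ring

end Polarization

lemma rank_smul_add_smul_le_rank_fromCols {R m n : Type*} [CommRing R]
    [StrongRankCondition R] [Fintype n] [DecidableEq n] (X Y : Matrix m n R) (c d : R) :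
    (c • X + d • Y).rank ≤ (Matrix.fromCols X Y).rank := by
  have h : c • X + d • Y = Matrix.fromCols X Y * Matrix.fromRows (c • (1 : Matrix n n R))
      (d • (1 : Matrix n n R)) := by
    rw [Matrix.fromCols_mul_fromRows, Matrix.mul_smul, Matrix.mul_smul, Matrix.mul_one,
      Matrix.mul_one]
  rw [h]
  exact Matrix.rank_mul_le_left _ _

section Euclidean

variable {m n p : ℕ}

def flatten : Matrix (Fin m) (Fin n) ℝ ≃ₗ[ℝ] EuclideanSpace ℝ (Fin m × Fin n) :=
  (LinearEquiv.curry ℝ ℝ (Fin m) (Fin n)).symm ≪≫ₗ (WithLp.linearEquiv 2 ℝ _).symm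

@[simp]
lemma flatten_apply (X : Matrix (Fin m) (Fin n) ℝ) (q : Fin m × Fin n) :
    flatten X q = X q.1 q.2 :=
  rfl

lemma vdot_eq_inner (y z : Fin p → ℝ) :
    vdot y z = ⟪WithLp.toLp 2 y, WithLp.toLp 2 z⟫_ℝ := by
  simp [vdot, PiLp.inner_apply, mul_comm]

lemma vnorm_eq_norm (y : Fin p → ℝ) : vnorm y = ‖WithLp.toLp 2 y‖ := by
  simp [vnorm, EuclideanSpace.norm_eq]

lemma finner_eq_inner (X Y : Matrix (Fin m) (Fin n) ℝ) :
    finner X Y = ⟪flatten X, flatten Y⟫_ℝ := by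
  simp [finner, PiLp.inner_apply, Fintype.sum_prod_type, mul_comm]

lemma fnorm_eq_norm (X : Matrix (Fin m) (Fin n) ℝ) : fnorm X = ‖flatten X‖ := by
  simp [fnorm, EuclideanSpace.norm_eq, Fintype.sum_prod_type]

lemma fnorm_pos {X : Matrix (Fin m) (Fin n) ℝ} (hX : X ≠ 0) : 0 < fnorm X := by
  rw [fnorm_eq_norm]
  exact norm_pos_iff.2 (flatten.map_ne_zero_iff.2 hX)

end Euclidean

section Restricted

variable {m n p : ℕ} (A : Matrix (Fin m) (Fin n) ℝ →ₗ[ℝ] (Fin p → ℝ)) (k : ℕ)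

def rayleighSet : Set ℝ :=
  {t | ∃ X : Matrix (Fin m) (Fin n) ℝ, X.rank ≤ k ∧ fnorm X = 1 ∧ t = vnorm (A X) ^ 2}

lemma exists_vnorm_le_mul_fnorm : ∃ C, ∀ X, vnorm (A X) ≤ C * fnorm X := by
  let T := LinearMap.toContinuousLinearMap
    ((WithLp.linearEquiv 2 ℝ (Fin p → ℝ)).symm.toLinearMap ∘ₗ A ∘ₗ flatten.symm.toLinearMap)
  refine ⟨‖T‖, fun X => ?_⟩
  simpa [vnorm_eq_norm, fnorm_eq_norm, T] using T.le_opNorm (flatten X)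

lemma bddAbove_rayleighSet : BddAbove (rayleighSet A k) := by
  obtain ⟨C, hC⟩ := exists_vnorm_le_mul_fnorm A
  refine ⟨C ^ 2, ?_⟩
  rintro _ ⟨X, -, hX, rfl⟩
  have := hC X
  rw [hX, mul_one] at this
  exact pow_le_pow_left₀ (Real.sqrt_nonneg _) this 2

lemma bddBelow_rayleighSet : BddBelow (rayleighSet A k) :=
  ⟨0, by rintro _ ⟨X, -, -, rfl⟩; positivity⟩

lemma lamMax_nonneg : 0 ≤ lamMax A k :=
  Real.sSup_nonneg (by rintro _ ⟨X, -, -, rfl⟩; positivity)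

variable {A k}

lemma vnorm_sq_div_fnorm_sq_mem_rayleighSet {Z : Matrix (Fin m) (Fin n) ℝ}
    (hZ : Z.rank ≤ k) (hZ0 : Z ≠ 0) :
    vnorm (A Z) ^ 2 / fnorm Z ^ 2 ∈ rayleighSet A k := by
  have hc := fnorm_pos hZ0
  refine ⟨(fnorm Z)⁻¹ • Z, ?_, ?_, ?_⟩
  · rwa [rank_smul_of_mem_nonZeroDivisors _
      (mem_nonZeroDivisors_of_ne_zero (inv_ne_zero hc.ne'))]
  · rw [fnorm_eq_norm, map_smul, norm_smul, ← fnorm_eq_norm,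
      Real.norm_of_nonneg (inv_nonneg.2 hc.le), inv_mul_cancel₀ hc.ne']
  · rw [map_smul, vnorm_eq_norm ((fnorm Z)⁻¹ • A Z), WithLp.toLp_smul, norm_smul,
      ← vnorm_eq_norm, Real.norm_of_nonneg (inv_nonneg.2 hc.le)]
    field_simp

lemma lamMin_mul_fnorm_sq_le {Z : Matrix (Fin m) (Fin n) ℝ} (hZ : Z.rank ≤ k) :
    lamMin A k * fnorm Z ^ 2 ≤ vnorm (A Z) ^ 2 := by
  rcases eq_or_ne Z 0 with rfl | hZ0
  · simp [fnorm, vnorm]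
  rw [← le_div_iff₀ (pow_pos (fnorm_pos hZ0) 2)]
  exact csInf_le (bddBelow_rayleighSet A k) (vnorm_sq_div_fnorm_sq_mem_rayleighSet hZ hZ0)

lemma vnorm_sq_le_lamMax_mul {Z : Matrix (Fin m) (Fin n) ℝ} (hZ : Z.rank ≤ k) :
    vnorm (A Z) ^ 2 ≤ lamMax A k * fnorm Z ^ 2 := by
  rcases eq_or_ne Z 0 with rfl | hZ0
  · simp [fnorm, vnorm]
  rw [← div_le_iff₀ (pow_pos (fnorm_pos hZ0) 2)]
  exact le_csSup (bddAbove_rayleighSet A k) (vnorm_sq_div_fnorm_sq_mem_rayleighSet hZ hZ0)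

end Restricted

theorem restricted_inner_product_bound_general
    {m n p : ℕ} (A : Matrix (Fin m) (Fin n) ℝ →ₗ[ℝ] (Fin p → ℝ))
    (k : ℕ) (α β : ℝ)
    (hα : α = lamMin A k) (hβ : β = lamMax A k) (hαpos : 0 < α) :
    ∀ X Y : Matrix (Fin m) (Fin n) ℝ,
      (Matrix.fromCols X Y).rank ≤ k →
      |2 / (α + β) * vdot (A X) (A Y) - finner X Y| ≤
        (β - α) / (β + α) * (fnorm X * fnorm Y) := by
  intro X Y hXY
  have hβ0 : 0 ≤ β := hβ ▸ lamMax_nonneg A k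
  rw [vdot_eq_inner, finner_eq_inner, fnorm_eq_norm, fnorm_eq_norm]
  refine abs_two_div_mul_inner_sub_inner_le (by linarith) fun c d => ?_
  have hZ := (rank_smul_add_smul_le_rank_fromCols X Y c d).trans hXY
  have hF : c • flatten X + d • flatten Y = flatten (c • X + d • Y) := by
    rw [map_add, map_smul, map_smul]
  have hT : c • WithLp.toLp 2 (A X) + d • WithLp.toLp 2 (A Y) =
      WithLp.toLp 2 (A (c • X + d • Y)) := by
    rw [map_add, map_smul, map_smul, WithLp.toLp_add, WithLp.toLp_smul, WithLp.toLp_smul]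
  rw [hF, hT, ← vnorm_eq_norm, ← fnorm_eq_norm, hα, hβ]
  exact ⟨lamMin_mul_fnorm_sq_le hZ, vnorm_sq_le_lamMax_mul hZ⟩

/-- restricted condition number bound on inner products (Lemma 2.3). -/
theorem restricted_inner_product_bound
    {m n p : ℕ} (A : Matrix (Fin m) (Fin n) ℝ →ₗ[ℝ] (Fin p → ℝ))
    (k : ℕ) (hk : 1 ≤ k) (α β : ℝ)
    (hα : α = lamMin A k) (hβ : β = lamMax A k) (hαpos : 0 < α) :
    ∀ X Y : Matrix (Fin m) (Fin n) ℝ,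
      (Matrix.fromCols X Y).rank ≤ k →
      |2 / (α + β) * vdot (A X) (A Y) - finner X Y| ≤
        (β - α) / (β + α) * (fnorm X * fnorm Y) :=
  restricted_inner_product_bound_general A k α β hα hβ hαpos

end Paper
end
end

section
/- Let X ∈ ℝ^{m×n} and let κ be a positive integer with rank(X) ≤ κ. Then rank(X) = min{ (1/2)(‖R‖_{2,0} + ‖L‖_{2,0}) : R ∈ ℝ^{m×κ}, L ∈ ℝ^{n×κ}, X = RLᵀ }, i.e. every factorization X = RLᵀ satisfies (1/2)(‖R‖_{2,0} + ‖L‖_{2,0}) ≥ rank(X), and there exists a factorization X = R̄L̄ᵀ with ‖R̄‖_{2,0} = ‖L̄‖_{2,0} = rank(X). -/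
open scoped BigOperators

noncomputable section

namespace Paper

open Matrix

/-! Every column of `R * Lᵀ` lies in the span of the nonzero columns of `R`, and every row in
the span of the nonzero columns of `L`, so each of `‖R‖_{2,0}`, `‖L‖_{2,0}` bounds the rank.
Conversely, a rank factorization `X = B * Cᵀ` with `rank X` columns, padded with zero columns up
to `κ`, attains both bounds: its factors have at most `rank X` nonzero columns, hence exactly
that many. -/

open Module Submodule

lemma l20_le {a k : ℕ} (U : Matrix (Fin a) (Fin k) ℝ) : l20 U ≤ k :=
  (Set.ncard_le_card _).trans_eq (Nat.card_eq_fintype_card.trans (Fintype.card_fin k))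

lemma rank_le_l20 {a k : ℕ} (U : Matrix (Fin a) (Fin k) ℝ) : U.rank ≤ l20 U := by
  set S := {j : Fin k | (fun i => U i j) ≠ 0}
  have hcols : Set.range Uᵀ ⊆ insert 0 (Set.range fun j : S => Uᵀ j) := by
    rintro _ ⟨j, rfl⟩
    by_cases hj : j ∈ S
    · exact Or.inr ⟨⟨j, hj⟩, rfl⟩
    · exact Or.inl (not_not.1 hj)
  calc U.rank = finrank ℝ (span ℝ (Set.range Uᵀ)) := U.rank_eq_finrank_span_cols
    _ ≤ finrank ℝ (span ℝ (Set.range fun j : S => Uᵀ j)) :=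
        (finrank_mono (span_mono hcols)).trans_eq (by rw [span_insert_zero])
    _ ≤ Fintype.card S := finrank_range_le_card _
    _ = l20 U := Nat.card_eq_fintype_card.symm.trans (Nat.card_coe_set_eq S)

section Factorization

variable {m n k : ℕ} {X : Matrix (Fin m) (Fin n) ℝ} {R : Matrix (Fin m) (Fin k) ℝ}
  {L : Matrix (Fin n) (Fin k) ℝ}

lemma rank_le_l20_left_of_eq_mul_transpose (hX : X = R * Lᵀ) : X.rank ≤ l20 R := by
  subst hX
  exact (rank_mul_le_left R Lᵀ).trans (rank_le_l20 R)

lemma rank_le_l20_right_of_eq_mul_transpose (hX : X = R * Lᵀ) : X.rank ≤ l20 L := by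
  subst hX
  exact (rank_mul_le_right R Lᵀ).trans ((rank_transpose L).trans_le (rank_le_l20 L))

end Factorization

lemma exists_eq_mul_transpose_of_rank {K : Type*} [Field K] {m n : Type*} [Fintype m]
    [Fintype n] (X : Matrix m n K) :
    ∃ (B : Matrix m (Fin X.rank) K) (C : Matrix n (Fin X.rank) K), X = B * Cᵀ := by
  classical
  let e : Basis (Fin X.rank) K (LinearMap.range X.mulVecLin) := finBasisOfFinrankEq _ _ rfl
  refine ⟨LinearMap.toMatrix'
      ((LinearMap.range X.mulVecLin).subtype ∘ₗ e.equivFun.symm.toLinearMap),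
    (LinearMap.toMatrix' (e.equivFun.toLinearMap ∘ₗ X.mulVecLin.rangeRestrict))ᵀ, ?_⟩
  rw [transpose_transpose, ← LinearMap.toMatrix'_comp]
  have hfactor : ((LinearMap.range X.mulVecLin).subtype ∘ₗ e.equivFun.symm.toLinearMap) ∘ₗ
      (e.equivFun.toLinearMap ∘ₗ X.mulVecLin.rangeRestrict) = X.mulVecLin := by
    refine LinearMap.ext fun v => ?_
    simp
  rw [hfactor]
  exact (LinearMap.toMatrix'_toLin' X).symm

def padCols {α : Type*} [Zero α] {a r : ℕ} (U : Matrix (Fin a) (Fin r) α) (κ : ℕ) :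
    Matrix (Fin a) (Fin κ) α :=
  fun i j => if h : (j : ℕ) < r then U i ⟨j, h⟩ else 0

lemma padCols_castLE {α : Type*} [Zero α] {a r κ : ℕ} (U : Matrix (Fin a) (Fin r) α)
    (h : r ≤ κ) (i : Fin a) (k : Fin r) : padCols U κ i (Fin.castLE h k) = U i k :=
  dif_pos k.isLt

lemma padCols_of_notMem_range {α : Type*} [Zero α] {a r κ : ℕ} (U : Matrix (Fin a) (Fin r) α)
    (h : r ≤ κ) {j : Fin κ} (hj : j ∉ Set.range (Fin.castLE h)) (i : Fin a) :
    padCols U κ i j = 0 :=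
  dif_neg fun hjr => hj ⟨⟨j, hjr⟩, rfl⟩

lemma padCols_mul_transpose_padCols {α : Type*} [CommSemiring α] {a b r κ : ℕ}
    (U : Matrix (Fin a) (Fin r) α) (V : Matrix (Fin b) (Fin r) α) (h : r ≤ κ) :
    padCols U κ * (padCols V κ)ᵀ = U * Vᵀ := by
  ext i j
  simp only [mul_apply, transpose_apply]
  refine (Fintype.sum_of_injective _ (Fin.castLE_injective h) _ _ (fun t ht => ?_)
    (fun k => ?_)).symm
  · rw [padCols_of_notMem_range U h ht, zero_mul]
  · rw [padCols_castLE, padCols_castLE]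

lemma l20_padCols {a r κ : ℕ} (U : Matrix (Fin a) (Fin r) ℝ) (h : r ≤ κ) :
    l20 (padCols U κ) = l20 U := by
  have hcols : {j : Fin κ | (fun i => padCols U κ i j) ≠ 0} =
      Fin.castLE h '' {k : Fin r | (fun i => U i k) ≠ 0} := by
    ext j
    by_cases hj : j ∈ Set.range (Fin.castLE h)
    · obtain ⟨k, rfl⟩ := hj
      simp [padCols_castLE, (Fin.castLE_injective h).eq_iff]
    · have hzero : (fun i => padCols U κ i j) = 0 := funext (padCols_of_notMem_range U h hj)
      exact iff_of_false (fun hne => hne hzero) (fun ⟨k, _, hk⟩ => hj ⟨k, hk⟩)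
  rw [l20, hcols, Set.ncard_image_of_injective _ (Fin.castLE_injective h), l20]

theorem rank_eq_min_l20_factorization_general
    {m n : ℕ} (X : Matrix (Fin m) (Fin n) ℝ) (κ : ℕ)
    (hrank : X.rank ≤ κ) :
    (∀ (R : Matrix (Fin m) (Fin κ) ℝ) (L : Matrix (Fin n) (Fin κ) ℝ),
        X = R * Lᵀ → (X.rank : ℝ) ≤ (1 / 2) * ((l20 R : ℝ) + (l20 L : ℝ))) ∧
    (∃ (R : Matrix (Fin m) (Fin κ) ℝ) (L : Matrix (Fin n) (Fin κ) ℝ),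
        X = R * Lᵀ ∧ l20 R = X.rank ∧ l20 L = X.rank) := by
  refine ⟨fun R L hX => ?_, ?_⟩
  · have hR : (X.rank : ℝ) ≤ l20 R := by exact_mod_cast rank_le_l20_left_of_eq_mul_transpose hX
    have hL : (X.rank : ℝ) ≤ l20 L := by exact_mod_cast rank_le_l20_right_of_eq_mul_transpose hX
    linarith
  · obtain ⟨B, C, hX⟩ := exists_eq_mul_transpose_of_rank X
    have hB : l20 B = X.rank := (l20_le B).antisymm (rank_le_l20_left_of_eq_mul_transpose hX)
    have hC : l20 C = X.rank := (l20_le C).antisymm (rank_le_l20_right_of_eq_mul_transpose hX)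
    exact ⟨padCols B κ, padCols C κ, hX.trans (padCols_mul_transpose_padCols B C hrank).symm,
      (l20_padCols B hrank).trans hB, (l20_padCols C hrank).trans hC⟩

/-- the rank equals the minimal half-sum of `ℓ_{2,0}` norms of factors
(Lemma 2.4). -/
theorem rank_eq_min_l20_factorization
    {m n : ℕ} (X : Matrix (Fin m) (Fin n) ℝ) (κ : ℕ) (hκ : 1 ≤ κ)
    (hrank : X.rank ≤ κ) :
    (∀ (R : Matrix (Fin m) (Fin κ) ℝ) (L : Matrix (Fin n) (Fin κ) ℝ),
        X = R * Lᵀ → (X.rank : ℝ) ≤ (1 / 2) * ((l20 R : ℝ) + (l20 L : ℝ))) ∧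
    (∃ (R : Matrix (Fin m) (Fin κ) ℝ) (L : Matrix (Fin n) (Fin κ) ℝ),
        X = R * Lᵀ ∧ l20 R = X.rank ∧ l20 L = X.rank) :=
  rank_eq_min_l20_factorization_general X κ hrank

end Paper
end
end

section
/- Let X ∈ ℝ^{m×n} have rank s and let κ be a positive integer with s ≤ κ. Then there exist R ∈ ℝ^{m×κ} and L ∈ ℝ^{n×κ} such that X = RLᵀ, RᵀR = LᵀL, and ‖R‖_{2,0} = ‖L‖_{2,0} = s. (Such a pair is obtained from a singular value decomposition X = P Diag(σ(X)) Qᵀ by taking the columns √σ_j(X)·P_j of R and √σ_j(X)·Q_j of L for j = 1,…,κ, where σ_j(X) is the j-th largest singular value of X.) -/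
open scoped BigOperators

noncomputable section

namespace Paper

open Matrix

/-! Diagonalise `X Xᵀ = U diag(σ²) Uᵀ` with `U` orthogonal. Then `Y = Uᵀ X` has orthogonal rows
of lengths `σᵢ` and `X = U Y`, and exactly `rank X` of the `σᵢ` are nonzero. Scaling the columns
of `U` by `√σᵢ` and the rows of `Y` by `1 / √σᵢ` balances both Gram matrices at `diag σ`. The rows
of `Y` with `σᵢ = 0` vanish, so those columns can be dropped, and the remaining `rank X ≤ κ`
columns are placed into `κ` slots along an embedding, the other slots being zero. -/

section

variable {R : Type*} [Ring R] [LinearOrder R] [IsStrictOrderedRing R] {m ι κ : Type*}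

theorem col_eq_zero_iff_transpose_mul_self_apply_eq_zero [Fintype m] (W : Matrix m ι R) (j : ι) :
    (fun i => W i j) = 0 ↔ (Wᵀ * W) j j = 0 := by
  rw [mul_apply']
  exact dotProduct_self_eq_zero.symm

theorem diagonal_support_mul_eq_self [Fintype m] [Fintype ι] [DecidableEq ι]
    {Y : Matrix ι m R} {d : ι → R} (h : Y * Yᵀ = diagonal d) :
    diagonal (fun i => if d i ≠ 0 then (1 : R) else 0) * Y = Y := by
  ext i a
  rw [diagonal_mul]
  split_ifs with hi
  · rw [one_mul]
  · have hrow := (col_eq_zero_iff_transpose_mul_self_apply_eq_zero Yᵀ i).2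
      (by rw [transpose_transpose, h, diagonal_apply_eq]; simpa using hi)
    rw [zero_mul]
    exact (congrFun hrow a).symm

end

section

variable (R : Type*) [Semiring R] {ι κ : Type*} {p : ι → Prop} [DecidablePred p] [DecidableEq κ]

def selectionMatrix (e : {i // p i} ↪ κ) : Matrix ι κ R :=
  of fun i j => if h : p i then if e ⟨i, h⟩ = j then 1 else 0 else 0

variable {R}

theorem selectionMatrix_mul_transpose [Fintype κ] [DecidableEq ι] (e : {i // p i} ↪ κ) :
    selectionMatrix R e * (selectionMatrix R e)ᵀ = diagonal fun i => if p i then 1 else 0 := by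
  ext i i'
  simp only [mul_apply, transpose_apply, selectionMatrix, of_apply, diagonal_apply]
  by_cases hi : p i <;> by_cases hi' : p i' <;> simp [hi, hi']
  rintro rfl
  exact absurd hi hi'

theorem transpose_selectionMatrix_mul_diagonal_mul_apply_self [Fintype ι] [DecidableEq ι]
    (e : {i // p i} ↪ κ) (g : ι → R) (j : κ) :
    ((selectionMatrix R e)ᵀ * diagonal g * selectionMatrix R e) j j =
      Function.extend e (fun i => g i) 0 j := by
  rw [mul_apply]
  simp only [mul_diagonal, transpose_apply, selectionMatrix, of_apply]
  by_cases hj : j ∈ Set.range e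
  · obtain ⟨⟨i, hi⟩, rfl⟩ := hj
    rw [e.injective.extend_apply, Finset.sum_eq_single i]
    · simp [hi]
    · intro b _ hb
      simp [e.injective.eq_iff, hb]
    · simp
  · rw [Function.extend_apply' _ _ _ (by simpa using hj)]
    refine Finset.sum_eq_zero fun i _ => ?_
    split_ifs with hi h <;> simp_all

end

theorem l20_eq_card_of_transpose_mul_self_eq {p k : ℕ} {ι : Type*} [Fintype ι] [DecidableEq ι]
    {σ : ι → ℝ} (e : {i // σ i ≠ 0} ↪ Fin k) {W : Matrix (Fin p) (Fin k) ℝ}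
    (hW : Wᵀ * W = (selectionMatrix ℝ e)ᵀ * diagonal σ * selectionMatrix ℝ e) :
    l20 W = Fintype.card {i // σ i ≠ 0} := by
  have hcols : {j | (fun i => W i j) ≠ 0} = Set.range e := by
    ext j
    rw [Set.mem_ofPred_eq, ne_eq, col_eq_zero_iff_transpose_mul_self_apply_eq_zero, hW,
      transpose_selectionMatrix_mul_diagonal_mul_apply_self]
    constructor
    · intro h
      by_contra hj
      exact h (Function.extend_apply' _ _ _ (by simpa using hj))
    · rintro ⟨i, rfl⟩
      rw [e.injective.extend_apply]
      exact i.2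
  rw [l20, hcols, Set.ncard_range_of_injective e.injective, Nat.card_eq_fintype_card]

theorem exists_eq_orthogonal_mul_orthogonal_rows {m n : Type*} [Fintype m] [Fintype n]
    [DecidableEq m] (X : Matrix m n ℝ) :
    ∃ (U : Matrix m m ℝ) (Y : Matrix m n ℝ) (σ : m → ℝ), Uᵀ * U = 1 ∧ X = U * Y ∧
      (∀ i, 0 ≤ σ i) ∧ Y * Yᵀ = diagonal (fun i => σ i ^ 2) ∧
      Fintype.card {i // σ i ≠ 0} = X.rank := by
  have hA : (X * Xᵀ).PosSemidef := by
    simpa [conjTranspose_eq_transpose_of_trivial] using posSemidef_self_mul_conjTranspose X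
  set u := hA.isHermitian.eigenvectorUnitary
  set d := hA.isHermitian.eigenvalues
  have hd : ∀ i, 0 ≤ d i := hA.eigenvalues_nonneg
  have hstar : star (u : Matrix m m ℝ) = (u : Matrix m m ℝ)ᵀ := by
    rw [star_eq_conjTranspose, conjTranspose_eq_transpose_of_trivial]
  have hdiag : (u : Matrix m m ℝ)ᵀ * (X * Xᵀ) * (u : Matrix m m ℝ) = diagonal d := by
    have h := hA.isHermitian.conjStarAlgAut_star_eigenvectorUnitary
    rwa [Unitary.conjStarAlgAut_apply, Unitary.coe_star, star_star, hstar,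
      RCLike.ofReal_real_eq_id, Function.id_comp] at h
  refine ⟨u, (u : Matrix m m ℝ)ᵀ * X, fun i => √(d i), ?_, ?_, fun i => Real.sqrt_nonneg _, ?_, ?_⟩
  · rw [← hstar, mem_unitaryGroup_iff'.mp u.2]
  · rw [← Matrix.mul_assoc, ← hstar, mem_unitaryGroup_iff.mp u.2, Matrix.one_mul]
  · simp only [Real.sq_sqrt (hd _)]
    rw [← hdiag, transpose_mul, transpose_transpose]
    simp only [Matrix.mul_assoc]
  · rw [← rank_self_mul_transpose, hA.isHermitian.rank_eq_card_non_zero_eigs]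
    simp only [ne_eq, Real.sqrt_eq_zero (hd _)]
    rfl

theorem exists_balanced_factorization_of_orthogonal_rows {m n ι κ : Type*} [Fintype m]
    [Fintype n] [Fintype ι] [DecidableEq ι] [Fintype κ] [DecidableEq κ]
    {U : Matrix m ι ℝ} (hU : Uᵀ * U = 1)
    {Y : Matrix ι n ℝ} {σ : ι → ℝ} (hσ : ∀ i, 0 ≤ σ i) (hY : Y * Yᵀ = diagonal fun i => σ i ^ 2)
    (e : {i // σ i ≠ 0} ↪ κ) :
    ∃ (R : Matrix m κ ℝ) (L : Matrix n κ ℝ), U * Y = R * Lᵀ ∧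
      Rᵀ * R = (selectionMatrix ℝ e)ᵀ * diagonal σ * selectionMatrix ℝ e ∧
      Lᵀ * L = (selectionMatrix ℝ e)ᵀ * diagonal σ * selectionMatrix ℝ e := by
  set P := selectionMatrix ℝ e
  have hroot : ∀ i, σ i ≠ 0 → √(σ i) ≠ 0 := fun i hi =>
    Real.sqrt_ne_zero'.mpr ((hσ i).lt_of_ne' hi)
  refine ⟨U * diagonal (fun i => √(σ i)) * P, Yᵀ * diagonal (fun i => (√(σ i))⁻¹) * P, ?_, ?_, ?_⟩
  · have hmid : diagonal (fun i => √(σ i)) * (P * Pᵀ) * diagonal (fun i => (√(σ i))⁻¹) =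
        diagonal fun i => if σ i ^ 2 ≠ 0 then 1 else 0 := by
      rw [selectionMatrix_mul_transpose, diagonal_mul_diagonal, diagonal_mul_diagonal]
      congr 1
      funext i
      by_cases hi : σ i = 0
      · simp [hi]
      · simp [hi, hroot i hi]
    calc U * Y = U * (diagonal (fun i => √(σ i)) * (P * Pᵀ) *
          diagonal (fun i => (√(σ i))⁻¹) * Y) := by
          rw [hmid, diagonal_support_mul_eq_self hY]
      _ = _ := by
          simp only [transpose_mul, diagonal_transpose, transpose_transpose, Matrix.mul_assoc]
  · calc _ = Pᵀ * (diagonal (fun i => √(σ i)) * (Uᵀ * U) * diagonal (fun i => √(σ i))) * P := by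
          simp only [transpose_mul, diagonal_transpose, Matrix.mul_assoc]
      _ = Pᵀ * diagonal σ * P := by
          rw [hU, Matrix.mul_one, diagonal_mul_diagonal]
          simp only [Real.mul_self_sqrt (hσ _)]
  · calc _ = Pᵀ * (diagonal (fun i => (√(σ i))⁻¹) * (Y * Yᵀ) *
          diagonal (fun i => (√(σ i))⁻¹)) * P := by
          simp only [transpose_mul, diagonal_transpose, transpose_transpose, Matrix.mul_assoc]
      _ = Pᵀ * diagonal σ * P := by
          rw [hY, diagonal_mul_diagonal, diagonal_mul_diagonal]
          congr 3
          funext i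
          by_cases hi : σ i = 0
          · simp [hi]
          · field_simp
            rw [Real.sq_sqrt (hσ i), div_self hi]

theorem exists_balanced_l20_factorization_general
    {m n : ℕ} (X : Matrix (Fin m) (Fin n) ℝ) (s κ : ℕ)
    (hs : X.rank = s) (hsκ : s ≤ κ) :
    ∃ (R : Matrix (Fin m) (Fin κ) ℝ) (L : Matrix (Fin n) (Fin κ) ℝ),
      X = R * Lᵀ ∧ Rᵀ * R = Lᵀ * L ∧ l20 R = s ∧ l20 L = s := by
  obtain ⟨U, Y, σ, hU, hXUY, hσ, hY, hcard⟩ := exists_eq_orthogonal_mul_orthogonal_rows X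
  obtain ⟨e⟩ : Nonempty ({i // σ i ≠ 0} ↪ Fin κ) :=
    Function.Embedding.nonempty_of_card_le (by rwa [hcard, hs, Fintype.card_fin])
  obtain ⟨R, L, hRL, hR, hL⟩ := exists_balanced_factorization_of_orthogonal_rows hU hσ hY e
  refine ⟨R, L, hXUY.trans hRL, hR.trans hL.symm, ?_, ?_⟩
  · rw [l20_eq_card_of_transpose_mul_self_eq e hR, hcard, hs]
  · rw [l20_eq_card_of_transpose_mul_self_eq e hL, hcard, hs]

/-- existence of a balanced factorization with `s` nonzero columns. -/
theorem exists_balanced_l20_factorization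
    {m n : ℕ} (X : Matrix (Fin m) (Fin n) ℝ) (s κ : ℕ)
    (hs : X.rank = s) (hκ : 1 ≤ κ) (hsκ : s ≤ κ) :
    ∃ (R : Matrix (Fin m) (Fin κ) ℝ) (L : Matrix (Fin n) (Fin κ) ℝ),
      X = R * Lᵀ ∧ Rᵀ * R = Lᵀ * L ∧ l20 R = s ∧ l20 L = s :=
  exists_balanced_l20_factorization_general X s κ hs hsκ

end Paper
end
end

section
/- Let φ ∈ 𝓛 and let z ∈ ℝ^κ. Then ‖z‖_0 = min{ Σ_{i=1}^κ φ(w_i) : w ∈ ℝ^κ, 0 ≤ w ≤ e, ⟨e − w, |z|⟩ = 0 }, where ‖z‖_0 is the number of nonzero entries of z, |z| is the componentwise absolute value, e is the all-ones vector, and the inequalities 0 ≤ w ≤ e are componentwise; moreover the minimum is attained. -/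
/-!
A feasible `w` must equal `1` wherever `z i ≠ 0`, and there `φ (w i) = φ 1 = 1`; elsewhere
`φ (w i) ≥ 0` because `w i ∈ [0,1]`. Hence every feasible value is at least `‖z‖₀`, and the
value `‖z‖₀` is attained by taking `w i = 1` on the support of `z` and `w i = t*` off it.
-/

open scoped BigOperators

noncomputable section

namespace Paper

open Matrix

open Finset

theorem eq_one_of_sum_one_sub_mul_abs_eq_zero {ι : Type*} [Fintype ι] {w z : ι → ℝ}
    (hw : ∀ i, w i ≤ 1) (h : ∑ i, (1 - w i) * |z i| = 0) {i : ι} (hi : z i ≠ 0) :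
    w i = 1 := by
  have hterm : (1 - w i) * |z i| = 0 :=
    (sum_eq_zero_iff_of_nonneg fun j _ => mul_nonneg (sub_nonneg.2 (hw j)) (abs_nonneg _)).1
      h i (mem_univ i)
  have := (mul_eq_zero.1 hterm).resolve_right (abs_ne_zero.2 hi)
  linarith

theorem coe_zeroNorm_eq_sum_ite {κ : ℕ} (z : Fin κ → ℝ) :
    ((zeroNorm z : ℝ) : EReal) = ∑ i, if z i ≠ 0 then (1 : EReal) else 0 := by
  rw [← sum_filter, sum_const, nsmul_one, zeroNorm, Set.ncard_eq_toFinset_card']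
  simp

theorem zeroNorm_le_sum_phi {κ : ℕ} (L : LFamily) {z w : Fin κ → ℝ}
    (hw : ∀ i, 0 ≤ w i ∧ w i ≤ 1) (hz : ∑ i, (1 - w i) * |z i| = 0) :
    ((zeroNorm z : ℝ) : EReal) ≤ ∑ i, L.phi (w i) := by
  rw [coe_zeroNorm_eq_sum_ite]
  refine sum_le_sum fun i _ => ?_
  split_ifs with hi
  · rw [eq_one_of_sum_one_sub_mul_abs_eq_zero (fun j => (hw j).2) hz hi, L.phi_one]
  · exact L.phi_nonneg (w i) (hw i)

theorem exists_feasible_sum_phi_eq_zeroNorm {κ : ℕ} (L : LFamily) (z : Fin κ → ℝ) :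
    ∃ w : Fin κ → ℝ, (∀ i, 0 ≤ w i ∧ w i ≤ 1) ∧ (∑ i, (1 - w i) * |z i|) = 0 ∧
      (∑ i, L.phi (w i)) = ((zeroNorm z : ℝ) : EReal) := by
  refine ⟨fun i => if z i ≠ 0 then 1 else L.tstar, fun i => ?_, sum_eq_zero fun i _ => ?_, ?_⟩
  · dsimp only
    split_ifs
    exacts [⟨zero_le_one, le_rfl⟩, L.tstar_mem]
  · by_cases hi : z i = 0 <;> simp [hi]
  · rw [coe_zeroNorm_eq_sum_ite]
    refine sum_congr rfl fun i _ => ?_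
    dsimp only
    split_ifs
    exacts [L.phi_one, L.phi_tstar]

/-- variational characterization of the `ℓ_0` norm via `φ ∈ 𝓛`. -/
theorem zeroNorm_eq_min_phi
    {κ : ℕ} (L : LFamily) (z : Fin κ → ℝ) :
    sInf {y : EReal | ∃ w : Fin κ → ℝ, (∀ i, 0 ≤ w i ∧ w i ≤ 1) ∧
        (∑ i, (1 - w i) * |z i|) = 0 ∧ y = ∑ i, L.phi (w i)} =
      ((zeroNorm z : ℝ) : EReal) ∧
    (∃ w : Fin κ → ℝ, (∀ i, 0 ≤ w i ∧ w i ≤ 1) ∧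
        (∑ i, (1 - w i) * |z i|) = 0 ∧
        (∑ i, L.phi (w i)) = ((zeroNorm z : ℝ) : EReal)) := by
  obtain ⟨w, hw, hz, hsum⟩ := exists_feasible_sum_phi_eq_zeroNorm L z
  refine ⟨IsLeast.csInf_eq ⟨⟨w, hw, hz, hsum.symm⟩, ?_⟩, w, hw, hz, hsum⟩
  rintro y ⟨w', hw', hz', rfl⟩
  exact zeroNorm_le_sum_phi L hw' hz'

end Paper
end
end

section
/- Let φ ∈ 𝓛 and let Z ∈ ℝ^{m×n}. With G(Z) = (‖Z_1‖, ‖Z_2‖, …, ‖Z_n‖)ᵀ ∈ ℝ^n the vector of Euclidean norms of the columns of Z, one has ‖Z‖_{2,0} = min{ Σ_{i=1}^n φ(w_i) : w ∈ ℝ^n, 0 ≤ w ≤ e, ⟨e − w, G(Z)⟩ = 0 }, where e is the all-ones vector and the inequalities are componentwise; moreover the minimum is attained. -/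
open scoped BigOperators

noncomputable section

namespace Paper

open Matrix

lemma colNorm_nonneg {m k : ℕ} (U : Matrix (Fin m) (Fin k) ℝ) (j : Fin k) : 0 ≤ colNorm U j :=
  Real.sqrt_nonneg _

lemma colNorm_eq_zero_iff {m k : ℕ} (U : Matrix (Fin m) (Fin k) ℝ) (j : Fin k) :
    colNorm U j = 0 ↔ (fun i => U i j) = 0 := by
  rw [colNorm, Real.sqrt_eq_zero (Finset.sum_nonneg fun i _ => sq_nonneg _),
    Finset.sum_eq_zero_iff_of_nonneg fun i _ => sq_nonneg _, funext_iff]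
  simp

lemma l20_eq_card_colNorm_ne_zero {m k : ℕ} (U : Matrix (Fin m) (Fin k) ℝ) :
    l20 U = (Finset.univ.filter fun j => colNorm U j ≠ 0).card := by
  rw [l20, Set.ncard_eq_toFinset_card']
  simp [colNorm_eq_zero_iff]

lemma eq_one_of_sum_one_sub_mul_eq_zero {ι : Type*} [Fintype ι] {w c : ι → ℝ}
    (hw : ∀ i, w i ≤ 1) (hc : ∀ i, 0 ≤ c i) (h : ∑ i, (1 - w i) * c i = 0) {i : ι}
    (hi : c i ≠ 0) : w i = 1 := by
  have hterm : (1 - w i) * c i = 0 :=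
    (Finset.sum_eq_zero_iff_of_nonneg (fun j _ => mul_nonneg (sub_nonneg.2 (hw j)) (hc j))).1
      h i (Finset.mem_univ i)
  linarith [(mul_eq_zero.1 hterm).resolve_right hi]

/-- The minimum is attained at `w i = 1` where `c i ≠ 0` and `w i = t*` elsewhere; the constraint
forces `w i = 1` wherever `c i ≠ 0`, and `φ ≥ 0` on `[0,1]` handles the remaining terms. -/
theorem LFamily.isLeast_sum_phi {ι : Type*} [Fintype ι] (L : LFamily) {c : ι → ℝ}
    (hc : ∀ i, 0 ≤ c i) :
    IsLeast {y : EReal | ∃ w : ι → ℝ, (∀ i, 0 ≤ w i ∧ w i ≤ 1) ∧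
        ∑ i, (1 - w i) * c i = 0 ∧ y = ∑ i, L.phi (w i)}
      ((Finset.univ.filter fun i => c i ≠ 0).card : EReal) := by
  rw [← Finset.sum_boole]
  refine ⟨⟨fun i => if c i = 0 then L.tstar else 1, fun i => ?_, ?_, ?_⟩, ?_⟩
  · dsimp only
    split_ifs
    exacts [L.tstar_mem, ⟨zero_le_one, le_rfl⟩]
  · refine Finset.sum_eq_zero fun i _ => ?_
    dsimp only
    split_ifs with hi <;> simp [hi]
  · refine Finset.sum_congr rfl fun i _ => ?_
    split_ifs <;> simp_all [L.phi_tstar, L.phi_one]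
  · rintro _ ⟨w, hw, hsum, rfl⟩
    refine Finset.sum_le_sum fun i _ => ?_
    split_ifs with hi
    · rw [eq_one_of_sum_one_sub_mul_eq_zero (fun j => (hw j).2) hc hsum hi, L.phi_one]
    · exact L.phi_nonneg _ (hw i)

/-- variational characterization of the `ℓ_{2,0}` norm via `φ ∈ 𝓛`. -/
theorem l20_eq_min_phi
    {m n : ℕ} (L : LFamily) (Z : Matrix (Fin m) (Fin n) ℝ) :
    sInf {y : EReal | ∃ w : Fin n → ℝ, (∀ i, 0 ≤ w i ∧ w i ≤ 1) ∧
        (∑ i, (1 - w i) * colNorm Z i) = 0 ∧ y = ∑ i, L.phi (w i)} =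
      ((l20 Z : ℝ) : EReal) ∧
    (∃ w : Fin n → ℝ, (∀ i, 0 ≤ w i ∧ w i ≤ 1) ∧
        (∑ i, (1 - w i) * colNorm Z i) = 0 ∧
        (∑ i, L.phi (w i)) = ((l20 Z : ℝ) : EReal)) := by
  have hleast := L.isLeast_sum_phi (colNorm_nonneg Z)
  rw [EReal.coe_natCast, l20_eq_card_colNorm_ne_zero]
  obtain ⟨w, hw, hsum, hval⟩ := hleast.1
  exact ⟨hleast.csInf_eq, w, hw, hsum, hval.symm⟩

end Paper
end
end
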